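/- arXiv:1812.09459 — 3 statements merged into one kernel-verified Lean document; each statement's English description precedes it below -/
import Mathlib

section
/- Let K ≥ 1 and N ≥ 1 be integers and let μ ∈ (0,1) be the normalized cache size. Let l* be the (unique) integer satisfying μK − 1 ≤ l* < μK. Define the placement vector a* ∈ ℝ^{K+1} by a*_{l*} = (l* + 1 − μK)/C(K,l*), a*_{l*+1} = (μK − l*)/C(K,l*+1), and a*_l = 0 for all other indices l. Then a* is a feasible cache placement vector, and for every feasible cache placement vector a one has R̄(a*) ≤ R̄(a); that is, a* minimizes the expected delivery rate of the MCCS. -/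
open Finset

/-- Number of distinct requests `Ñ(d)` of a demand vector `d`. -/
def distinctReq {K N : ℕ} (d : Fin K → Fin N) : ℕ :=
  (Finset.univ.image d).card

/-- Expected delivery rate `R̄(a)` of the MCCS under placement vector `a`. -/
noncomputable def expectedRate (K N : ℕ) (a : Fin (K + 1) → ℝ) : ℝ :=
  ((N : ℝ) ^ K)⁻¹ *
    ∑ d : Fin K → Fin N, ∑ l : Fin K,
      ((K.choose ((l : ℕ) + 1) : ℝ) - ((K - distinctReq d).choose ((l : ℕ) + 1) : ℝ)) *
        a l.castSucc

/-- Feasibility of a cache placement vector `a` for normalized cache size `μ`: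
file-partition constraint, cache-size constraint, and `0 ≤ a_l ≤ 1`. -/
def Feasible (K : ℕ) (μ : ℝ) (a : Fin (K + 1) → ℝ) : Prop :=
  (∑ l : Fin (K + 1), (K.choose (l : ℕ) : ℝ) * a l) = 1 ∧
  (∑ l : Fin K, ((K - 1).choose (l : ℕ) : ℝ) * a l.succ) ≤ μ ∧
  ∀ l, 0 ≤ a l ∧ a l ≤ 1

/-!
With `w_l = C(K,l) a_l` the constraints say that `w` is a probability vector on `{0, …, K}` whose
mean `∑ l w_l` is at most `μK`, and the identity
`C(K,l+1) - C(K-n,l+1) = C(K,l) ∑_{j<n} C(K-l,j+1) / C(K,j+1)` turns the rate into `∑ w_l H(l)`,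
where `H(l)` is the average over demands of `∑_{j<Ñ(d)} C(K-l,j+1) / C(K,j+1)`.
Each `l ↦ C(K-l,j+1)` has forward difference `-C(K-l-1,j)`, so `H` is nonincreasing and convex.
Its supporting line through `l*` and `l*+1` then bounds `∑ w_l H(l)` from below by the value of
that line at `μK`; this is exactly the rate of `a*`, whose weights sit on `l*, l*+1` with mean `μK`.
-/

open fwdDiff

theorem add_fwdDiff_mul_le_of_monotoneOn {f : ℕ → ℝ} {K t l : ℕ}
    (hf : MonotoneOn (Δ_[1] f) (Set.Iio K)) (ht : t < K) (hl : l ≤ K) :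
    f t + Δ_[1] f t * ((l : ℝ) - t) ≤ f l := by
  rcases le_total t l with htl | hlt
  · have hsum : ((l - t : ℕ) : ℝ) * Δ_[1] f t ≤ f l - f t := by
      rw [← sum_Ico_sub f htl, ← Nat.card_Ico t l, ← nsmul_eq_mul]
      exact card_nsmul_le_sum _ _ _ fun i hi ↦ by
        rw [mem_Ico] at hi
        exact hf ht (by simp; omega) hi.1
    rw [Nat.cast_sub htl] at hsum
    linarith
  · have hsum : f t - f l ≤ ((t - l : ℕ) : ℝ) * Δ_[1] f t := by
      rw [← sum_Ico_sub f hlt, ← Nat.card_Ico l t, ← nsmul_eq_mul]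
      exact sum_le_card_nsmul _ _ _ fun i hi ↦ by
        rw [mem_Ico] at hi
        exact hf (by simp; omega) ht hi.2.le
    rw [Nat.cast_sub hlt] at hsum
    linarith

theorem add_mul_sub_le_sum_mul {ι : Type*} (s : Finset ι) {w p g : ι → ℝ} {c β x m : ℝ}
    (hβ : β ≤ 0) (hw : ∀ i ∈ s, 0 ≤ w i) (hw₁ : ∑ i ∈ s, w i = 1)
    (hm : ∑ i ∈ s, p i * w i ≤ m) (hg : ∀ i ∈ s, c + β * (p i - x) ≤ g i) :
    c + β * (m - x) ≤ ∑ i ∈ s, g i * w i :=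
  calc
    c + β * (m - x) ≤ c + β * (∑ i ∈ s, p i * w i - x) := by
      linarith [mul_le_mul_of_nonpos_left (sub_le_sub_right hm x) hβ]
    _ = ∑ i ∈ s, ((c - β * x) * w i + β * (p i * w i)) := by
      rw [sum_add_distrib, ← mul_sum, ← mul_sum, hw₁]
      ring
    _ = ∑ i ∈ s, (c + β * (p i - x)) * w i := sum_congr rfl fun i _ ↦ by ring
    _ ≤ ∑ i ∈ s, g i * w i := sum_le_sum fun i hi ↦ mul_le_mul_of_nonneg_right (hg i hi) (hw i hi)

namespace Nat

theorem choose_sub_eq_choose_sub_succ_add {K i : ℕ} (j : ℕ) (hi : i < K) :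
    (K - i).choose (j + 1) = (K - (i + 1)).choose (j + 1) + (K - (i + 1)).choose j := by
  rw [show K - i = K - (i + 1) + 1 by omega, choose_succ_succ', add_comm]

theorem choose_mul_choose_sub_comm (K l j : ℕ) :
    K.choose l * (K - l).choose j = K.choose j * (K - j).choose l := by
  have h₁ := choose_mul (n := K) (k := l + j) (Nat.le_add_right l j)
  have h₂ := choose_mul (n := K) (k := j + l) (Nat.le_add_right j l)
  rw [Nat.add_sub_cancel_left] at h₁ h₂
  rw [← h₁, ← h₂, add_comm j l, choose_symm_add]

end Nat

noncomputable def rateCoeff (K n l : ℕ) : ℝ :=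
  ∑ j ∈ range n, ((K - l).choose (j + 1) : ℝ) / K.choose (j + 1)

@[simp] theorem rateCoeff_self (K n : ℕ) : rateCoeff K n K = 0 := by
  simp [rateCoeff]

theorem choose_mul_rateCoeff {K n l : ℕ} (hn : n ≤ K) :
    K.choose l * rateCoeff K n l = (K.choose (l + 1) : ℝ) - (K - n).choose (l + 1) := by
  have hterm : ∀ j ∈ range n,
      (K.choose l : ℝ) * ((K - l).choose (j + 1) / K.choose (j + 1)) =
        (K - j).choose (l + 1) - (K - (j + 1)).choose (l + 1) := by
    intro j hj
    have hj : j < K := by rw [mem_range] at hj; omega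
    have hC : (K.choose (j + 1) : ℝ) ≠ 0 := by exact_mod_cast (Nat.choose_pos hj).ne'
    rw [Nat.choose_sub_eq_choose_sub_succ_add l hj, mul_div_assoc', div_eq_iff hC]
    push_cast
    rw [add_sub_cancel_left, mul_comm _ (K.choose (j + 1) : ℝ)]
    exact_mod_cast Nat.choose_mul_choose_sub_comm K l (j + 1)
  rw [rateCoeff, mul_sum, sum_congr rfl hterm,
    sum_range_sub' (fun j ↦ ((K - j).choose (l + 1) : ℝ)) n]
  simp

theorem fwdDiff_rateCoeff {K i : ℕ} (n : ℕ) (hi : i < K) :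
    Δ_[1] (rateCoeff K n) i = -∑ j ∈ range n, ((K - (i + 1)).choose j : ℝ) / K.choose (j + 1) := by
  simp only [fwdDiff, rateCoeff, ← sum_sub_distrib, ← sum_neg_distrib, ← sub_div,
    Nat.choose_sub_eq_choose_sub_succ_add _ hi]
  push_cast
  ring_nf

theorem distinctReq_le {K N : ℕ} (d : Fin K → Fin N) : distinctReq d ≤ K :=
  (card_image_le).trans_eq (card_fin K)

noncomputable def avgRateCoeff (K N l : ℕ) : ℝ :=
  ((N : ℝ) ^ K)⁻¹ * ∑ d : Fin K → Fin N, rateCoeff K (distinctReq d) l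

theorem expectedRate_eq_sum (K N : ℕ) (a : Fin (K + 1) → ℝ) :
    expectedRate K N a = ∑ l : Fin (K + 1), avgRateCoeff K N l * (K.choose l * a l) := by
  simp only [expectedRate, avgRateCoeff, Fin.sum_univ_castSucc, Fin.val_last, rateCoeff_self,
    sum_const_zero, mul_zero, zero_mul, add_zero, Fin.val_castSucc,
    ← choose_mul_rateCoeff (distinctReq_le _), mul_sum, sum_mul]
  rw [sum_comm]
  exact sum_congr rfl fun l _ ↦ sum_congr rfl fun d _ ↦ by ring

theorem fwdDiff_avgRateCoeff {K i : ℕ} (N : ℕ) (hi : i < K) :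
    Δ_[1] (avgRateCoeff K N) i = -(((N : ℝ) ^ K)⁻¹ * ∑ d : Fin K → Fin N,
      ∑ j ∈ range (distinctReq d), ((K - (i + 1)).choose j : ℝ) / K.choose (j + 1)) := by
  rw [fwdDiff, avgRateCoeff, avgRateCoeff, ← mul_sub, ← sum_sub_distrib, ← mul_neg,
    ← sum_neg_distrib]
  exact congrArg _ (sum_congr rfl fun d _ ↦ fwdDiff_rateCoeff (distinctReq d) hi)

theorem monotoneOn_fwdDiff_avgRateCoeff (K N : ℕ) :
    MonotoneOn (Δ_[1] (avgRateCoeff K N)) (Set.Iio K) := by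
  intro i hi i' hi' hii'
  rw [fwdDiff_avgRateCoeff N hi, fwdDiff_avgRateCoeff N hi', neg_le_neg_iff]
  gcongr

theorem fwdDiff_avgRateCoeff_nonpos {K i : ℕ} (N : ℕ) (hi : i < K) :
    Δ_[1] (avgRateCoeff K N) i ≤ 0 := by
  rw [fwdDiff_avgRateCoeff N hi, neg_nonpos]
  positivity

theorem sum_mul_choose_mul_eq (K : ℕ) (a : Fin (K + 1) → ℝ) :
    ∑ l : Fin (K + 1), (l : ℝ) * (K.choose l * a l) =
      K * ∑ l : Fin K, ((K - 1).choose l : ℝ) * a l.succ := by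
  cases K with
  | zero => simp
  | succ K =>
    rw [Fin.sum_univ_succ, mul_sum]
    simp only [Fin.val_zero, Nat.cast_zero, zero_mul, zero_add, Fin.val_succ, Nat.add_sub_cancel]
    refine sum_congr rfl fun l _ ↦ ?_
    rw [← mul_assoc, ← mul_assoc]
    congr 1
    exact_mod_cast (mul_comm _ _).trans (Nat.add_one_mul_choose_eq K l).symm

theorem sum_mul_choose_mul_of_two_point {K t : ℕ} (ht : t < K) {A B : ℝ} {a : Fin (K + 1) → ℝ}
    (ha : ∀ l : Fin (K + 1), a l =
      if (l : ℕ) = t then A / K.choose t else if (l : ℕ) = t + 1 then B / K.choose (t + 1) else 0)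
    (f : ℕ → ℝ) :
    ∑ l : Fin (K + 1), f l * (K.choose l * a l) = f t * A + f (t + 1) * B := by
  have hCt : (K.choose t : ℝ) ≠ 0 := by exact_mod_cast (Nat.choose_pos ht.le).ne'
  have hCt₁ : (K.choose (t + 1) : ℝ) ≠ 0 := by exact_mod_cast (Nat.choose_pos ht).ne'
  rw [sum_eq_add (⟨t, by omega⟩ : Fin (K + 1)) ⟨t + 1, by omega⟩ (by simp [Fin.ext_iff]) ?_
    (by simp) (by simp)]
  · simp [ha, mul_div_cancel₀ _ hCt, mul_div_cancel₀ _ hCt₁]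
  · intro l _ hl
    simp only [ne_eq, Fin.ext_iff] at hl
    simp [ha, hl.1, hl.2]

theorem optimal_cache_placement_MCCS_general
    (K N : ℕ)
    (μ : ℝ) (hμ1 : μ < 1)
    (lstar : ℕ) (hl1 : μ * K - 1 ≤ (lstar : ℝ)) (hl2 : (lstar : ℝ) < μ * K)
    (astar : Fin (K + 1) → ℝ)
    (hastar : ∀ l : Fin (K + 1),
      astar l =
        if (l : ℕ) = lstar then ((lstar : ℝ) + 1 - μ * K) / (K.choose lstar : ℝ)
        else if (l : ℕ) = lstar + 1 then (μ * K - (lstar : ℝ)) / (K.choose (lstar + 1) : ℝ)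
        else 0) :
    Feasible K μ astar ∧
      ∀ a : Fin (K + 1) → ℝ, Feasible K μ a →
        expectedRate K N astar ≤ expectedRate K N a := by
  have ht : lstar < K := by
    have : (lstar : ℝ) < K := by
      nlinarith [mul_nonneg (sub_nonneg.2 hμ1.le) (K.cast_nonneg (α := ℝ))]
    exact_mod_cast this
  have hK₀ : (0 : ℝ) < K := by exact_mod_cast Nat.zero_lt_of_lt ht
  have two_point := sum_mul_choose_mul_of_two_point ht hastar
  have hfile : ∑ l : Fin (K + 1), (K.choose l : ℝ) * astar l = 1 := by
    simpa using two_point 1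
  have hcache : ∑ l : Fin K, ((K - 1).choose l : ℝ) * astar l.succ = μ := by
    have h := two_point (↑)
    rw [sum_mul_choose_mul_eq] at h
    refine mul_left_cancel₀ hK₀.ne' (h.trans ?_)
    push_cast; ring
  refine ⟨⟨hfile, hcache.le, fun l ↦ ?bounds⟩, fun a ⟨ha_file, ha_cache, ha_bounds⟩ ↦ ?_⟩
  case bounds =>
    have hCt : (1 : ℝ) ≤ K.choose lstar := by exact_mod_cast Nat.choose_pos ht.le
    have hCt₁ : (1 : ℝ) ≤ K.choose (lstar + 1) := by exact_mod_cast Nat.choose_pos ht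
    rw [hastar]
    split_ifs
    · exact ⟨div_nonneg (by linarith) (by positivity), (div_le_one (by positivity)).2 (by linarith)⟩
    · exact ⟨div_nonneg (by linarith) (by positivity), (div_le_one (by positivity)).2 (by linarith)⟩
    · exact ⟨le_rfl, zero_le_one⟩
  set H := avgRateCoeff K N
  have hlower : H lstar + Δ_[1] H lstar * (μ * K - lstar) ≤ expectedRate K N a := by
    rw [expectedRate_eq_sum]
    refine add_mul_sub_le_sum_mul univ (fwdDiff_avgRateCoeff_nonpos N ht)
      (fun l _ ↦ mul_nonneg (by positivity) (ha_bounds l).1) (by simpa using ha_file) ?_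
      fun l _ ↦ add_fwdDiff_mul_le_of_monotoneOn (monotoneOn_fwdDiff_avgRateCoeff K N) ht l.is_le
    rw [sum_mul_choose_mul_eq]
    linarith [mul_le_mul_of_nonneg_left ha_cache hK₀.le]
  rw [expectedRate_eq_sum, two_point H]
  simp only [fwdDiff] at hlower
  linarith

/-- **Theorem 1 (optimality of the two-subgroup placement).**
For `K, N ≥ 1` and `μ ∈ (0,1)`, with `l*` the integer satisfying `μK − 1 ≤ l* < μK`,
the placement `a*` with `a*_{l*} = (l*+1−μK)/C(K,l*)`, `a*_{l*+1} = (μK−l*)/C(K,l*+1)`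
and all other entries zero is feasible and minimizes the expected delivery rate. -/
theorem optimal_cache_placement_MCCS
    (K N : ℕ) (hK : 1 ≤ K) (hN : 1 ≤ N)
    (μ : ℝ) (hμ0 : 0 < μ) (hμ1 : μ < 1)
    (lstar : ℕ) (hl1 : μ * K - 1 ≤ (lstar : ℝ)) (hl2 : (lstar : ℝ) < μ * K)
    (astar : Fin (K + 1) → ℝ)
    (hastar : ∀ l : Fin (K + 1),
      astar l =
        if (l : ℕ) = lstar then ((lstar : ℝ) + 1 - μ * K) / (K.choose lstar : ℝ)
        else if (l : ℕ) = lstar + 1 then (μ * K - (lstar : ℝ)) / (K.choose (lstar + 1) : ℝ)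
        else 0) :
    Feasible K μ astar ∧
      ∀ a : Fin (K + 1) → ℝ, Feasible K μ a →
        expectedRate K N astar ≤ expectedRate K N a :=
  optimal_cache_placement_MCCS_general K N μ hμ1 lstar hl1 hl2 astar hastar
end

section
/- Let K ≥ 1 and N ≥ 1 be integers and let μ ∈ (0,1]. If a feasible cache placement vector a minimizes the expected delivery rate R̄ over all feasible cache placement vectors, then the cache-size constraint is attained with equality: Σ_{l=1}^{K} C(K−1,l−1) a_l = μ; that is, the cache storage is always fully utilized at optimality. -/
open Finset

/-- **Lemma 1 (full cache utilization).** For `μ ∈ (0,1]`, any feasible placement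
minimizing the expected rate attains the cache-size constraint with equality. -/
theorem optimal_placement_uses_full_cache
    (K N : ℕ) (hK : 1 ≤ K) (hN : 1 ≤ N)
    (μ : ℝ) (hμ0 : 0 < μ) (hμ1 : μ ≤ 1)
    (a : Fin (K + 1) → ℝ) (hfeas : Feasible K μ a)
    (hopt : ∀ a' : Fin (K + 1) → ℝ, Feasible K μ a' →
      expectedRate K N a ≤ expectedRate K N a') :
    (∑ l : Fin K, ((K - 1).choose (l : ℕ) : ℝ) * a l.succ) = μ := by
  classical
  obtain ⟨hpart, hcache, hbnd⟩ := hfeas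
  set S := ∑ l : Fin K, ((K - 1).choose (l : ℕ) : ℝ) * a l.succ with hSdef
  by_contra hne
  have hSlt : S < μ := lt_of_le_of_ne hcache hne
  -- Step 1: there is a positive coordinate with index < K
  have hexists : ∃ j : Fin (K + 1), (j : ℕ) < K ∧ 0 < a j := by
    by_contra hno
    push_neg at hno
    have hzero : ∀ j : Fin (K + 1), (j : ℕ) < K → a j = 0 := fun j hj =>
      le_antisymm (hno j hj) (hbnd j).1
    have hlast : a (Fin.last K) = 1 := by
      have h := hpart
      rw [Finset.sum_eq_single (Fin.last K)] at h
      · simpa [Nat.choose_self] using h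
      · intro j _ hj
        have hjK : (j : ℕ) < K := by
          have := j.isLt
          have : (j : ℕ) ≤ K := by omega
          rcases lt_or_eq_of_le this with h' | h'
          · exact h'
          · exact absurd (Fin.ext (by simpa [Fin.val_last] using h')) hj
        simp [hzero j hjK]
      · simp
    have hS1 : S = 1 := by
      have hlK : K - 1 < K := by omega
      rw [hSdef, Finset.sum_eq_single (⟨K - 1, hlK⟩ : Fin K)]
      · have hsucc : ((⟨K - 1, hlK⟩ : Fin K)).succ = Fin.last K := by
          apply Fin.ext
          simp [Fin.val_last]
          omega
        rw [hsucc, hlast]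
        simp [Nat.choose_self]
      · intro l _ hl
        have hlv : (l : ℕ) ≠ K - 1 := by
          intro h; exact hl (Fin.ext h)
        have : ((l.succ : Fin (K + 1)) : ℕ) < K := by
          have := l.isLt
          simp only [Fin.val_succ]
          omega
        simp [hzero l.succ this]
      · simp
    linarith
  obtain ⟨jl, hm, hapos⟩ := hexists
  have hjlne : jl ≠ Fin.last K := by
    intro h
    rw [h, Fin.val_last] at hm
    exact lt_irrefl _ hm
  set c := (K.choose (jl : ℕ) : ℝ) with hcdef
  have hcpos : (0 : ℝ) < c := by
    rw [hcdef]
    exact_mod_cast Nat.choose_pos (le_of_lt hm)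
  set δ := min (a jl) ((μ - S) / c) with hδdef
  have hδpos : 0 < δ := lt_min hapos (div_pos (by linarith) hcpos)
  have hδa : δ ≤ a jl := min_le_left _ _
  have hδc : c * δ ≤ μ - S := by
    have h := min_le_right (a jl) ((μ - S) / c)
    have : c * δ ≤ c * ((μ - S) / c) := by
      apply mul_le_mul_of_nonneg_left _ hcpos.le
      exact h
    calc c * δ ≤ c * ((μ - S) / c) := this
      _ = μ - S := by field_simp
  set p : Fin (K + 1) → ℝ :=
    fun j => if j = jl then -δ else if j = Fin.last K then c * δ else 0 with hpdef
  set a' : Fin (K + 1) → ℝ := fun j => a j + p j with ha'def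
  have hplast : p (Fin.last K) = c * δ := by
    simp [hpdef, Ne.symm hjlne]
  have hpjl : p jl = -δ := by simp [hpdef]
  have hpother : ∀ j, j ≠ jl → j ≠ Fin.last K → p j = 0 := by
    intro j h1 h2; simp [hpdef, h1, h2]
  -- weighted sum of the perturbation
  have hpsum : ∀ w : Fin (K + 1) → ℝ,
      ∑ j : Fin (K + 1), w j * p j = w jl * (-δ) + w (Fin.last K) * (c * δ) := by
    intro w
    rw [← Finset.sum_subset (Finset.subset_univ ({jl, Fin.last K} : Finset (Fin (K + 1))))]
    · rw [Finset.sum_pair hjlne, hpjl, hplast]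
    · intro j _ hj
      simp only [Finset.mem_insert, Finset.mem_singleton, not_or] at hj
      rw [hpother j hj.1 hj.2, mul_zero]
  -- partition constraint for a'
  have hpart' : ∑ j : Fin (K + 1), (K.choose (j : ℕ) : ℝ) * a' j = 1 := by
    simp only [ha'def, mul_add, Finset.sum_add_distrib]
    rw [hpart, hpsum (fun j => (K.choose (j : ℕ) : ℝ))]
    simp only [Fin.val_last, Nat.choose_self, ← hcdef, Nat.cast_one]
    ring
  -- cache constraint for a'
  have hcache' : ∑ l : Fin K, ((K - 1).choose (l : ℕ) : ℝ) * a' l.succ ≤ μ := by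
    have hsplit : ∑ l : Fin K, ((K - 1).choose (l : ℕ) : ℝ) * a' l.succ
        = S + ∑ l : Fin K, ((K - 1).choose (l : ℕ) : ℝ) * p l.succ := by
      simp only [ha'def, mul_add, Finset.sum_add_distrib, hSdef]
    have hlK : K - 1 < K := by omega
    have hb : ∑ l : Fin K, ((K - 1).choose (l : ℕ) : ℝ) * p l.succ ≤ c * δ := by
      calc ∑ l : Fin K, ((K - 1).choose (l : ℕ) : ℝ) * p l.succ
          ≤ ∑ l : Fin K, (if l = (⟨K - 1, hlK⟩ : Fin K) then c * δ else 0) := by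
            apply Finset.sum_le_sum
            intro l _
            by_cases hl : l = (⟨K - 1, hlK⟩ : Fin K)
            · subst hl
              have hsucc : ((⟨K - 1, hlK⟩ : Fin K)).succ = Fin.last K := by
                apply Fin.ext
                simp [Fin.val_last]
                omega
              rw [hsucc, hplast, if_pos rfl]
              simp [Nat.choose_self]
            · rw [if_neg hl]
              have hsucc : (l.succ : Fin (K + 1)) ≠ Fin.last K := by
                intro h
                apply hl
                apply Fin.ext
                have : (l : ℕ) + 1 = K := by
                  have := congrArg Fin.val h
                  simpa [Fin.val_last] using this
                simp
                omega
              by_cases hj : (l.succ : Fin (K + 1)) = jl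
              · rw [hj, hpjl]
                have : (0 : ℝ) ≤ ((K - 1).choose (l : ℕ) : ℝ) := by positivity
                nlinarith
              · rw [hpother _ hj hsucc, mul_zero]
        _ = c * δ := by simp
    linarith
  -- bounds for a'
  have hbd2 : c * a jl + a (Fin.last K) ≤ 1 := by
    have hnn : ∀ j ∈ (Finset.univ : Finset (Fin (K + 1))),
        j ∉ ({jl, Fin.last K} : Finset (Fin (K + 1))) → 0 ≤ (K.choose (j : ℕ) : ℝ) * a j := by
      intro j _ _
      exact mul_nonneg (by positivity) (hbnd j).1
    have h := Finset.sum_le_sum_of_subset_of_nonneg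
      (Finset.subset_univ ({jl, Fin.last K} : Finset (Fin (K + 1)))) hnn
    rw [Finset.sum_pair hjlne, hpart] at h
    simpa [Fin.val_last, Nat.choose_self, ← hcdef] using h
  have hbnd' : ∀ j, 0 ≤ a' j ∧ a' j ≤ 1 := by
    intro j
    by_cases h1 : j = jl
    · simp only [ha'def, h1, hpjl]
      refine ⟨by linarith, ?_⟩
      have := (hbnd jl).2
      linarith
    · by_cases h2 : j = Fin.last K
      · simp only [ha'def, h2, hplast]
        have h3 : c * δ ≤ c * a jl := mul_le_mul_of_nonneg_left hδa hcpos.le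
        refine ⟨?_, by linarith⟩
        have := (hbnd (Fin.last K)).1
        nlinarith
      · simp only [ha'def, hpother j h1 h2, add_zero]
        exact hbnd j
  -- rate of a'
  have hinner : ∀ d : Fin K → Fin N,
      ∑ l : Fin K, ((K.choose ((l : ℕ) + 1) : ℝ) - ((K - distinctReq d).choose ((l : ℕ) + 1) : ℝ))
          * p l.castSucc
        = ((K.choose ((jl : ℕ) + 1) : ℝ) - ((K - distinctReq d).choose ((jl : ℕ) + 1) : ℝ)) * (-δ) := by
    intro d
    rw [Finset.sum_eq_single (⟨(jl : ℕ), hm⟩ : Fin K)]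
    · have hcast : ((⟨(jl : ℕ), hm⟩ : Fin K)).castSucc = jl := by
        apply Fin.ext; simp [Fin.coe_castSucc]
      rw [hcast, hpjl]
    · intro l _ hl
      have h1 : (l.castSucc : Fin (K + 1)) ≠ jl := by
        intro h
        apply hl
        apply Fin.ext
        have := congrArg Fin.val h
        simpa [Fin.coe_castSucc] using this
      have h2 : (l.castSucc : Fin (K + 1)) ≠ Fin.last K := by
        intro h
        have := congrArg Fin.val h
        simp [Fin.coe_castSucc, Fin.val_last] at this
        omega
      rw [hpother _ h1 h2, mul_zero]
    · simp
  have hrate : expectedRate K N a' = expectedRate K N a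
      - δ * (((N : ℝ) ^ K)⁻¹ * ∑ d : Fin K → Fin N,
          ((K.choose ((jl : ℕ) + 1) : ℝ) - ((K - distinctReq d).choose ((jl : ℕ) + 1) : ℝ))) := by
    unfold expectedRate
    have : ∀ d : Fin K → Fin N,
        ∑ l : Fin K, ((K.choose ((l : ℕ) + 1) : ℝ)
            - ((K - distinctReq d).choose ((l : ℕ) + 1) : ℝ)) * a' l.castSucc
        = (∑ l : Fin K, ((K.choose ((l : ℕ) + 1) : ℝ)
            - ((K - distinctReq d).choose ((l : ℕ) + 1) : ℝ)) * a l.castSucc)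
          + ((K.choose ((jl : ℕ) + 1) : ℝ) - ((K - distinctReq d).choose ((jl : ℕ) + 1) : ℝ)) * (-δ) := by
      intro d
      rw [← hinner d, ← Finset.sum_add_distrib]
      apply Finset.sum_congr rfl
      intro l _
      simp only [ha'def]
      ring
    rw [Finset.sum_congr rfl fun d _ => this d, Finset.sum_add_distrib]
    rw [← Finset.sum_mul]
    ring
  -- positivity of the rate coefficient
  have hNpos : (0 : ℝ) < ((N : ℝ) ^ K)⁻¹ := by
    have : (0 : ℝ) < (N : ℝ) := by exact_mod_cast Nat.lt_of_lt_of_le Nat.zero_lt_one hN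
    positivity
  have hpos : 0 < ((N : ℝ) ^ K)⁻¹ * ∑ d : Fin K → Fin N,
      ((K.choose ((jl : ℕ) + 1) : ℝ) - ((K - distinctReq d).choose ((jl : ℕ) + 1) : ℝ)) := by
    apply mul_pos hNpos
    apply Finset.sum_pos
    · intro d _
      have h1 : 1 ≤ distinctReq d := by
        have hne : (Finset.univ.image d).Nonempty :=
          ⟨d ⟨0, by omega⟩, Finset.mem_image_of_mem d (Finset.mem_univ _)⟩
        have := Finset.card_pos.mpr hne
        simpa [distinctReq] using this
      have hlt : (K - distinctReq d).choose ((jl : ℕ) + 1) < K.choose ((jl : ℕ) + 1) := by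
        have h2 : (K - distinctReq d).choose ((jl : ℕ) + 1) ≤ (K - 1).choose ((jl : ℕ) + 1) :=
          Nat.choose_le_choose _ (by omega)
        have e : K.choose ((jl : ℕ) + 1) = (K - 1).choose (jl : ℕ) + (K - 1).choose ((jl : ℕ) + 1) := by
          have hK' : K - 1 + 1 = K := by omega
          calc K.choose ((jl : ℕ) + 1) = (K - 1 + 1).choose ((jl : ℕ) + 1) := by rw [hK']
            _ = (K - 1).choose (jl : ℕ) + (K - 1).choose ((jl : ℕ) + 1) :=
                Nat.choose_succ_succ _ _
        have h4 : 0 < (K - 1).choose (jl : ℕ) := Nat.choose_pos (by omega)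
        omega
      have : ((K - distinctReq d).choose ((jl : ℕ) + 1) : ℝ) < (K.choose ((jl : ℕ) + 1) : ℝ) := by
        exact_mod_cast hlt
      linarith
    · have : Nonempty (Fin N) := ⟨⟨0, by omega⟩⟩
      exact Finset.univ_nonempty
  have hle := hopt a' ⟨hpart', hcache', hbnd'⟩
  rw [hrate] at hle
  nlinarith
end

section
/- Let K ≥ 1 and N ≥ 1 be integers and let μ ∈ (0,1). Then there exists a feasible cache placement vector a* that minimizes the expected delivery rate R̄ over all feasible cache placement vectors and has at most two nonzero entries. -/
open Finset

section LP

variable {n : ℕ}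

private lemma sum_mul_single (g : Fin n → ℝ) (q : Fin n) (x : ℝ) :
    ∑ p, g p * (Pi.single q x : Fin n → ℝ) p = g q * x := by
  simp [Pi.single_apply, mul_ite, Finset.sum_ite_eq']

private lemma sum_affine (g a v : Fin n → ℝ) (t : ℝ) :
    ∑ j, g j * (a j + t * v j) = (∑ j, g j * a j) + t * ∑ j, g j * v j := by
  rw [Finset.mul_sum, ← Finset.sum_add_distrib]
  exact Finset.sum_congr rfl fun j _ => by ring

private lemma move (b m c : Fin n → ℝ) (μ : ℝ) (a v : Fin n → ℝ)
    (ha1 : ∑ j, b j * a j = 1) (ha2 : ∑ j, m j * a j ≤ μ) (ha3 : ∀ j, 0 ≤ a j)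
    (hv1 : ∑ j, b j * v j = 0) (hv2 : ∑ j, m j * v j = 0)
    (hsupp : ∀ p, v p ≠ 0 → 0 < a p) (hq : ∃ q, v q < 0) :
    ∃ t : ℝ, 0 < t ∧ (∃ p0, v p0 < 0 ∧ a p0 + t * v p0 = 0) ∧
      ((∑ j, b j * (a j + t * v j)) = 1 ∧ (∑ j, m j * (a j + t * v j)) ≤ μ ∧
        ∀ j, 0 ≤ a j + t * v j) ∧
      (∑ j, c j * (a j + t * v j)) = (∑ j, c j * a j) + t * ∑ j, c j * v j := by
  classical
  obtain ⟨q, hqneg⟩ := hq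
  have hF : (Finset.univ.filter fun p => v p < 0).Nonempty :=
    ⟨q, by simp [hqneg]⟩
  obtain ⟨p0, hp0F, hmin⟩ :=
    Finset.exists_min_image (Finset.univ.filter fun p => v p < 0)
      (fun p => a p / (-v p)) hF
  have hvp0 : v p0 < 0 := (Finset.mem_filter.mp hp0F).2
  have hap0 : 0 < a p0 := hsupp p0 (ne_of_lt hvp0)
  set t : ℝ := a p0 / (-v p0) with ht
  have ht0 : 0 < t := div_pos hap0 (by linarith)
  have htp0 : t * (-v p0) = a p0 := div_mul_cancel₀ _ (by linarith)
  refine ⟨t, ht0, ⟨p0, hvp0, by linarith⟩, ⟨?_, ?_, ?_⟩, sum_affine c a v t⟩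
  · rw [sum_affine, ha1, hv1, mul_zero, add_zero]
  · rw [sum_affine, hv2, mul_zero, add_zero]; exact ha2
  · intro j
    rcases le_or_gt 0 (v j) with h | h
    · have := ha3 j
      nlinarith
    · have hj : t ≤ a j / (-v j) :=
        hmin j (Finset.mem_filter.mpr ⟨Finset.mem_univ _, h⟩)
      have := (le_div_iff₀ (by linarith : (0:ℝ) < -v j)).mp hj
      linarith

private lemma lp_min (b m c : Fin n → ℝ) (hb : ∀ j, 1 ≤ b j) (μ : ℝ)
    (hne : ∃ a : Fin n → ℝ, (∑ j, b j * a j = 1 ∧ (∑ j, m j * a j) ≤ μ ∧ ∀ j, 0 ≤ a j)) :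
    ∃ a : Fin n → ℝ, ((∑ j, b j * a j = 1 ∧ (∑ j, m j * a j) ≤ μ ∧ ∀ j, 0 ≤ a j)) ∧
      (∀ x : Fin n → ℝ, (∑ j, b j * x j = 1 ∧ (∑ j, m j * x j) ≤ μ ∧ ∀ j, 0 ≤ x j) →
        (∑ j, c j * a j) ≤ ∑ j, c j * x j) ∧
      {j | a j ≠ 0}.ncard ≤ 2 := by
  classical
  set f : (Fin n → ℝ) → ℝ := fun x => ∑ j, c j * x j with hf
  set S : Set (Fin n → ℝ) :=
    {a | ∑ j, b j * a j = 1 ∧ (∑ j, m j * a j) ≤ μ ∧ ∀ j, 0 ≤ a j} with hSdef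
  have hmemS : ∀ a : Fin n → ℝ, a ∈ S ↔
      (∑ j, b j * a j = 1 ∧ (∑ j, m j * a j) ≤ μ ∧ ∀ j, 0 ≤ a j) := fun a => Iff.rfl
  have hcsum : ∀ g : Fin n → ℝ, Continuous (fun a : Fin n → ℝ => ∑ j, g j * a j) :=
    fun g => continuous_finset_sum _ fun j _ => continuous_const.mul (continuous_apply j)
  -- upper bound implied
  have hub : ∀ a ∈ S, ∀ j, a j ≤ 1 := by
    intro a ha j
    have h1 : b j * a j ≤ ∑ p, b p * a p :=
      Finset.single_le_sum
        (fun p _ => mul_nonneg (le_trans zero_le_one (hb p)) (ha.2.2 p))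
        (Finset.mem_univ j)
    rw [ha.1] at h1
    nlinarith [hb j, ha.2.2 j]
  have hcl : IsClosed S := by
    have h1 : IsClosed {a : Fin n → ℝ | ∑ j, b j * a j = 1} :=
      isClosed_eq (hcsum b) continuous_const
    have h2 : IsClosed {a : Fin n → ℝ | (∑ j, m j * a j) ≤ μ} :=
      isClosed_le (hcsum m) continuous_const
    have h3 : IsClosed {a : Fin n → ℝ | ∀ j, 0 ≤ a j} := by
      rw [Set.setOf_forall]
      exact isClosed_iInter fun j => isClosed_le continuous_const (continuous_apply j)
    rw [hSdef, Set.setOf_and, Set.setOf_and]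
    exact h1.inter (h2.inter h3)
  have hcp : IsCompact S := by
    refine IsCompact.of_isClosed_subset (isCompact_Icc (a := (0 : Fin n → ℝ)) (b := 1))
      hcl ?_
    intro a ha
    rw [Set.mem_Icc]
    exact ⟨fun j => ha.2.2 j, fun j => hub a ha j⟩
  obtain ⟨a1, ha1S, ha1min⟩ := hcp.exists_isMinOn hne ((hcsum c).continuousOn)
  have hP : ∃ k, ∃ a, a ∈ S ∧ IsMinOn f S a ∧ {j | a j ≠ 0}.ncard = k :=
    ⟨_, a1, ha1S, ha1min, rfl⟩
  obtain ⟨a, haS, hamin, hacard⟩ := Nat.find_spec hP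
  have hcard2 : {j | a j ≠ 0}.ncard ≤ 2 := by
    by_contra h2
    push_neg at h2
    -- extract three distinct support elements
    set T : Finset (Fin n) := Finset.univ.filter fun j => a j ≠ 0 with hT
    have hTcard : {j | a j ≠ 0}.ncard = T.card := by
      rw [← Set.ncard_coe_finset]
      congr 1
      ext p; simp [hT]
    rw [hTcard] at h2 hacard
    obtain ⟨i, j, l, hi, hj, hl, hij, hil, hjl⟩ := Finset.two_lt_card_iff.mp h2
    have hai : 0 < a i := lt_of_le_of_ne (haS.2.2 i) (Ne.symm (Finset.mem_filter.mp hi).2)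
    have haj : 0 < a j := lt_of_le_of_ne (haS.2.2 j) (Ne.symm (Finset.mem_filter.mp hj).2)
    have hal : 0 < a l := lt_of_le_of_ne (haS.2.2 l) (Ne.symm (Finset.mem_filter.mp hl).2)
    -- choose coefficients α β γ
    obtain ⟨α, β, γ, hbv, hmv, hvne⟩ :
        ∃ α β γ : ℝ, b i * α + b j * β + b l * γ = 0 ∧
          m i * α + m j * β + m l * γ = 0 ∧ (α ≠ 0 ∨ γ ≠ 0) := by
      by_cases hw3 : b i * m j - b j * m i = 0
      · exact ⟨b j, -(b i), 0, by ring, by nlinarith, Or.inl (by nlinarith [hb j])⟩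
      · exact ⟨b j * m l - b l * m j, b l * m i - b i * m l, b i * m j - b j * m i,
          by ring, by ring, Or.inr hw3⟩
    set v : Fin n → ℝ := Pi.single i α + Pi.single j β + Pi.single l γ with hvdef
    have hsum3 : ∀ g : Fin n → ℝ, ∑ p, g p * v p = g i * α + g j * β + g l * γ := by
      intro g
      simp only [hvdef, Pi.add_apply, mul_add, Finset.sum_add_distrib, sum_mul_single]
    have hv1 : ∑ p, b p * v p = 0 := by rw [hsum3]; exact hbv
    have hv2 : ∑ p, m p * v p = 0 := by rw [hsum3]; exact hmv
    have hvi : v i = α := by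
      simp [hvdef, Pi.single_eq_of_ne hij, Pi.single_eq_of_ne hil]
    have hvl : v l = γ := by
      simp [hvdef, Pi.single_eq_of_ne hil.symm, Pi.single_eq_of_ne hjl.symm]
    have hvsupp : ∀ p, v p ≠ 0 → 0 < a p := by
      intro p hp
      by_contra hap
      have hpa : a p = 0 := le_antisymm (not_lt.mp (by exact fun h => hap h)) (haS.2.2 p)
      have hpi : p ≠ i := fun h => absurd (h ▸ hpa) hai.ne'
      have hpj : p ≠ j := fun h => absurd (h ▸ hpa) haj.ne'
      have hpl : p ≠ l := fun h => absurd (h ▸ hpa) hal.ne'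
      apply hp
      simp [hvdef, Pi.single_eq_of_ne hpi, Pi.single_eq_of_ne hpj, Pi.single_eq_of_ne hpl]
    have hvne' : ∃ q, v q ≠ 0 := by
      rcases hvne with h | h
      · exact ⟨i, hvi ▸ h⟩
      · exact ⟨l, hvl ▸ h⟩
    have hneg : ∃ q, v q < 0 := by
      by_contra h
      push_neg at h
      have : ∀ p ∈ Finset.univ, b p * v p = 0 := by
        refine (Finset.sum_eq_zero_iff_of_nonneg ?_).mp hv1
        exact fun p _ => mul_nonneg (le_trans zero_le_one (hb p)) (h p)
      obtain ⟨q, hq⟩ := hvne'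
      exact hq (by nlinarith [this q (Finset.mem_univ q), hb q, h q])
    have hpos : ∃ q, 0 < v q := by
      by_contra h
      push_neg at h
      have : ∀ p ∈ Finset.univ, b p * v p = 0 := by
        refine (Finset.sum_eq_zero_iff_of_nonpos ?_).mp hv1
        exact fun p _ => mul_nonpos_of_nonneg_of_nonpos (le_trans zero_le_one (hb p)) (h p)
      obtain ⟨q, hq⟩ := hvne'
      exact hq (by nlinarith [this q (Finset.mem_univ q), hb q, h q])
    -- c · v = 0
    have hcv : ∑ p, c p * v p = 0 := by
      have h1 : 0 ≤ ∑ p, c p * v p := by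
        obtain ⟨t, ht0, _, hfeas, hfval⟩ :=
          move b m c μ a v haS.1 haS.2.1 haS.2.2 hv1 hv2 hvsupp hneg
        have := isMinOn_iff.mp hamin _ hfeas
        rw [hf] at this
        simp only at this
        rw [hfval] at this
        nlinarith
      have h2 : ∑ p, c p * v p ≤ 0 := by
        have hv1' : ∑ p, b p * (-v) p = 0 := by
          simp only [Pi.neg_apply, mul_neg]
          rw [Finset.sum_neg_distrib, hv1, neg_zero]
        have hv2' : ∑ p, m p * (-v) p = 0 := by
          simp only [Pi.neg_apply, mul_neg]
          rw [Finset.sum_neg_distrib, hv2, neg_zero]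
        have hsupp' : ∀ p, (-v) p ≠ 0 → 0 < a p := by
          intro p hp; exact hvsupp p (by simpa using hp)
        have hneg' : ∃ q, (-v) q < 0 := by
          obtain ⟨q, hq⟩ := hpos; exact ⟨q, by simpa using hq⟩
        obtain ⟨t, ht0, _, hfeas, hfval⟩ :=
          move b m c μ a (-v) haS.1 haS.2.1 haS.2.2 hv1' hv2' hsupp' hneg'
        have := isMinOn_iff.mp hamin _ hfeas
        rw [hf] at this
        simp only at this
        rw [hfval] at this
        have hcneg : ∑ p, c p * (-v) p = -∑ p, c p * v p := by
          simp only [Pi.neg_apply, mul_neg]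
          rw [Finset.sum_neg_distrib]
        rw [hcneg] at this
        nlinarith
      linarith
    -- move to reduce support
    obtain ⟨t, ht0, ⟨p0, hvp0, hp00⟩, hfeas, hfval⟩ :=
      move b m c μ a v haS.1 haS.2.1 haS.2.2 hv1 hv2 hvsupp hneg
    set a' : Fin n → ℝ := fun p => a p + t * v p with ha'
    have ha'S : a' ∈ S := hfeas
    have ha'min : IsMinOn f S a' := by
      refine isMinOn_iff.mpr fun x hx => ?_
      have : f a' = f a := by
        rw [hf]; simp only [ha']
        rw [hfval, hcv, mul_zero, add_zero]
      rw [this]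
      exact isMinOn_iff.mp hamin x hx
    have hssub : {p | a' p ≠ 0} ⊂ {p | a p ≠ 0} := by
      constructor
      · intro p hp
        simp only [Set.mem_setOf_eq] at hp ⊢
        intro hap
        rcases eq_or_ne (v p) 0 with hvp | hvp
        · exact hp (by simp [ha', hvp, hap])
        · exact absurd hap (hvsupp p hvp).ne'
      · intro hsub
        have hp0mem : p0 ∈ {p | a p ≠ 0} :=
          (hvsupp p0 (ne_of_lt hvp0)).ne'
        have := hsub hp0mem
        simp only [Set.mem_setOf_eq, ha'] at this
        exact this hp00
    have hlt : {p | a' p ≠ 0}.ncard < {p | a p ≠ 0}.ncard :=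
      Set.ncard_lt_ncard hssub (Set.toFinite _)
    have hfind : Nat.find hP ≤ {p | a' p ≠ 0}.ncard :=
      Nat.find_min' hP ⟨a', ha'S, ha'min, rfl⟩
    rw [hTcard] at hlt
    omega
  exact ⟨a, haS, fun x hx => isMinOn_iff.mp hamin x hx, hcard2⟩

end LP
/-- **Lemma 3.** For `μ ∈ (0,1)` there exists an optimal feasible placement with
at most two nonzero entries. -/
theorem optimal_placement_at_most_two_nonzero
    (K N : ℕ) (hK : 1 ≤ K) (hN : 1 ≤ N)
    (μ : ℝ) (hμ0 : 0 < μ) (hμ1 : μ < 1) :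
    ∃ astar : Fin (K + 1) → ℝ,
      Feasible K μ astar ∧
      (∀ a : Fin (K + 1) → ℝ, Feasible K μ a →
        expectedRate K N astar ≤ expectedRate K N a) ∧
      {l : Fin (K + 1) | astar l ≠ 0}.ncard ≤ 2 := by
  classical
  set b : Fin (K+1) → ℝ := fun j => (K.choose (j:ℕ) : ℝ) with hbdef
  set mv : Fin (K+1) → ℝ :=
    fun j => if (j:ℕ) = 0 then 0 else ((K-1).choose ((j:ℕ)-1) : ℝ) with hmdef
  set cv : Fin (K+1) → ℝ := fun j => ((N:ℝ)^K)⁻¹ *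
    ∑ d : Fin K → Fin N, ∑ l : Fin K,
      (if (l.castSucc : Fin (K+1)) = j then
        ((K.choose ((l:ℕ)+1):ℝ) - ((K - distinctReq d).choose ((l:ℕ)+1):ℝ)) else 0)
    with hcdef
  have hb : ∀ j : Fin (K+1), 1 ≤ b j := by
    intro j
    have := Nat.choose_pos (Nat.lt_succ_iff.mp j.isLt)
    simp only [hbdef]
    exact_mod_cast this
  -- conversion for the cache constraint
  have hmconv : ∀ a : Fin (K+1) → ℝ,
      ∑ j, mv j * a j = ∑ l : Fin K, ((K-1).choose (l:ℕ) : ℝ) * a l.succ := by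
    intro a
    rw [Fin.sum_univ_succ]
    simp [hmdef]
  -- conversion for the objective
  have hcconv : ∀ a : Fin (K+1) → ℝ, ∑ j, cv j * a j = expectedRate K N a := by
    intro a
    simp only [hcdef, expectedRate, Finset.mul_sum, Finset.sum_mul, ite_mul, zero_mul]
    rw [Finset.sum_comm]
    refine Finset.sum_congr rfl fun d _ => ?_
    rw [Finset.sum_comm]
    refine Finset.sum_congr rfl fun l _ => ?_
    simp only [mul_ite, mul_zero, ite_mul, zero_mul]
    rw [Finset.sum_ite_eq, if_pos (Finset.mem_univ _)]
    ring
  -- feasible witness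
  have h0last : (0 : Fin (K+1)) ≠ Fin.last K := by
    intro h
    have := congrArg Fin.val h
    simp [Fin.val_last] at this
    omega
  set a0 : Fin (K+1) → ℝ :=
    Pi.single (0 : Fin (K+1)) (1-μ) + Pi.single (Fin.last K) μ with ha0
  have hsum0 : ∀ g : Fin (K+1) → ℝ,
      ∑ p, g p * a0 p = g 0 * (1-μ) + g (Fin.last K) * μ := by
    intro g
    simp only [ha0, Pi.add_apply, mul_add, Finset.sum_add_distrib, sum_mul_single]
  have hne : ∃ a : Fin (K+1) → ℝ,
      (∑ j, b j * a j = 1 ∧ (∑ j, mv j * a j) ≤ μ ∧ ∀ j, 0 ≤ a j) := by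
    refine ⟨a0, ?_, ?_, ?_⟩
    · rw [hsum0]
      simp only [hbdef]
      norm_num [Fin.val_last, Nat.choose_self]
    · rw [hsum0]
      have h1 : mv 0 = 0 := by simp [hmdef]
      have h2 : mv (Fin.last K) = 1 := by
        simp only [hmdef, Fin.val_last]
        rw [if_neg (by omega)]
        rw [Nat.choose_self]
        norm_num
      rw [h1, h2]
      linarith
    · intro p
      simp only [ha0, Pi.add_apply, Pi.single_apply]
      split_ifs <;> linarith
  obtain ⟨a, ⟨hfa1, hfa2, hfa3⟩, hmin, hcard⟩ := lp_min b mv cv hb μ hne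
  have hub : ∀ j, a j ≤ 1 := by
    intro j
    have h1 : b j * a j ≤ ∑ p, b p * a p :=
      Finset.single_le_sum
        (fun p _ => mul_nonneg (le_trans zero_le_one (hb p)) (hfa3 p))
        (Finset.mem_univ j)
    rw [hfa1] at h1
    nlinarith [hb j, hfa3 j]
  refine ⟨a, ⟨hfa1, by rw [← hmconv]; exact hfa2, fun l => ⟨hfa3 l, hub l⟩⟩, ?_, hcard⟩
  intro x hx
  rw [← hcconv, ← hcconv]
  exact hmin x ⟨hx.1, by rw [hmconv]; exact hx.2.1, fun j => (hx.2.2 j).1⟩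
end
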